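/- For every μ ∈ 𝐌, the Hoover coefficient satisfies H(μ) = F_μ(m_μ) − L_μ(F_μ(m_μ)). -/

import Mathlib

open MeasureTheory Filter Topology

noncomputable section

/-- The mean of a measure on `ℝ`. -/
def mMean (μ : Measure ℝ) : ℝ := ∫ x, x ∂μ

/-- `μ ∈ 𝐌`: a Borel probability measure on `ℝ₊` (modelled as a measure on `ℝ` giving no
mass to negative numbers) with finite nonzero mean. -/
def MemM (μ : Measure ℝ) : Prop :=
  IsProbabilityMeasure μ ∧ μ {x | x < 0} = 0 ∧ Integrable id μ ∧ 0 < mMean μ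

/-- The cumulative distribution function `F_μ(x) = μ([0,x])`. -/
def cdfR (μ : Measure ℝ) (x : ℝ) : ℝ := (μ (Set.Icc 0 x)).toReal

/-- The quantile function `Q_μ(p) = inf {x ∈ ℝ₊ : F_μ(x) ≥ p}`. -/
def quant (μ : Measure ℝ) (p : ℝ) : ℝ := sInf {x : ℝ | 0 ≤ x ∧ p ≤ cdfR μ x}

/-- The Lorenz function `L_μ(p) = (∫_0^p Q_μ(t) dt) / m_μ`. -/
def lorenz (μ : Measure ℝ) (p : ℝ) : ℝ := (∫ t in (0:ℝ)..p, quant μ t) / mMean μ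

/-- The pseudo-Lorenz function `Λ_μ(p) = (∫_{[0,Q_μ(p)]} u dμ(u)) / m_μ` for `p ∈ [0,1)`,
with `Λ_μ(1) = 1`. -/
def pseudoLorenz (μ : Measure ℝ) (p : ℝ) : ℝ :=
  if p = 1 then 1 else (∫ u in Set.Icc (0:ℝ) (quant μ p), u ∂μ) / mMean μ

/-- The Gini coefficient `G(μ) = (∫∫ |x-y| d(μ⊗μ)) / (2 m_μ)`. -/
def gini (μ : Measure ℝ) : ℝ := (∫ z : ℝ × ℝ, |z.1 - z.2| ∂(μ.prod μ)) / (2 * mMean μ)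

/-- The Hoover coefficient `H(μ) = (∫ |x - m_μ| dμ) / (2 m_μ)`. -/
def hoover (μ : Measure ℝ) : ℝ := (∫ x, |x - mMean μ| ∂μ) / (2 * mMean μ)

/-- The Wasserstein-1 distance `W₁(μ,ν) = ∫_0^1 |Q_μ - Q_ν|`. -/
def W1 (μ ν : Measure ℝ) : ℝ := ∫ t in (0:ℝ)..1, |quant μ t - quant ν t|

/-- Weak convergence of a sequence of measures: convergence of integrals of all bounded
continuous functions. -/
def WeakCv (μs : ℕ → Measure ℝ) (ν : Measure ℝ) : Prop :=
  ∀ f : ℝ → ℝ, Continuous f → (∃ C : ℝ, ∀ x, |f x| ≤ C) →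
    Tendsto (fun n => ∫ x, f x ∂(μs n)) atTop (𝓝 (∫ x, f x ∂ν))

/-- Uniform integrability of a family of measures on `ℝ₊`:
`sup_i ∫_{(α,∞)} x dμ_i(x) → 0` as `α → +∞`. -/
def UnifInt {ι : Type*} (μs : ι → Measure ℝ) : Prop :=
  ∀ ε > (0:ℝ), ∃ A : ℝ, ∀ α ≥ A, ∀ i, (∫ x in Set.Ioi α, x ∂(μs i)) ≤ ε

end

/-!
Since `∫ (x - m) dμ = 0`, the mean absolute deviation about the mean `m` is twice the mean
shortfall below it: `∫ |x - m| dμ = 2 ∫_{[0,m]} (m - x) dμ = 2 (m F(m) - ∫_{[0,m]} x dμ)`.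
For `0 < t ≤ F(x)` the quantile function satisfies `Q(t) ≤ y ↔ t ≤ F(y)` (by right-continuity
of `F`), so `Q` pushes Lebesgue measure on `(0, F(x)]` forward to `μ` restricted to `[0, x]`;
hence `∫_{[0,m]} x dμ = ∫_0^{F(m)} Q = m L(F(m))`.
-/

open Set

section Quantile

variable {μ : Measure ℝ}

lemma cdfR_mono [IsFiniteMeasure μ] : Monotone (cdfR μ) := fun _ _ hxy =>
  ENNReal.toReal_mono (measure_ne_top μ _) (measure_mono (Icc_subset_Icc_right hxy))

lemma cdfR_nonneg {x : ℝ} : 0 ≤ cdfR μ x := ENNReal.toReal_nonneg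

lemma cdfR_of_neg {x : ℝ} (hx : x < 0) : cdfR μ x = 0 := by
  simp [cdfR, Icc_eq_empty_of_lt hx]

lemma tendsto_cdfR_nhdsGT [IsFiniteMeasure μ] (x : ℝ) :
    Tendsto (cdfR μ) (𝓝[>] x) (𝓝 (cdfR μ x)) := by
  have hinter : ⋂ r > x, Icc (0 : ℝ) r = Icc 0 x := by
    ext y
    simp only [mem_iInter₂, mem_Icc]
    refine ⟨fun h => ⟨(h (x + 1) (by linarith)).1, ?_⟩, fun h r hr => ⟨h.1, h.2.trans hr.le⟩⟩
    exact le_of_forall_gt_imp_ge_of_dense fun r hr => (h r hr).2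
  have hμ : Tendsto (fun r => μ (Icc 0 r)) (𝓝[>] x) (𝓝 (μ (Icc 0 x))) := by
    rw [← hinter]
    exact tendsto_measure_biInter_gt (fun _ _ => nullMeasurableSet_Icc)
      (fun _ _ _ hij => Icc_subset_Icc_right hij) ⟨x + 1, by linarith, measure_ne_top μ _⟩
  exact (ENNReal.tendsto_toReal (measure_ne_top μ _)).comp hμ

lemma quant_nonneg (t : ℝ) : 0 ≤ quant μ t :=
  Real.sInf_nonneg fun _ hx => hx.1

lemma quant_le_iff [IsFiniteMeasure μ] {t w y : ℝ} (ht : 0 < t) (htw : t ≤ cdfR μ w) :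
    quant μ t ≤ y ↔ t ≤ cdfR μ y := by
  set S := {v : ℝ | 0 ≤ v ∧ t ≤ cdfR μ v}
  have hw : 0 ≤ w := not_lt.mp fun hw => by linarith [cdfR_of_neg (μ := μ) hw]
  change sInf S ≤ y ↔ _
  constructor
  · intro hy
    refine ge_of_tendsto (tendsto_cdfR_nhdsGT y) ?_
    filter_upwards [self_mem_nhdsWithin] with z (hz : y < z)
    obtain ⟨v, hv, hvz⟩ := exists_lt_of_csInf_lt (s := S) ⟨w, hw, htw⟩ (hy.trans_lt hz)
    exact hv.2.trans (cdfR_mono hvz.le)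
  · intro hy
    have hy0 : 0 ≤ y := not_lt.mp fun hy0 => by linarith [cdfR_of_neg (μ := μ) hy0]
    exact csInf_le ⟨0, fun _ hv => hv.1⟩ ⟨hy0, hy⟩

-- Not `Monotone`: past the total mass of `μ` the defining set is empty and `sInf ∅ = 0`.
lemma monotoneOn_quant [IsFiniteMeasure μ] (x : ℝ) :
    MonotoneOn (quant μ) (Ioc 0 (cdfR μ x)) := fun _ ha _ hb hab =>
  (quant_le_iff ha.1 ha.2).mpr (hab.trans ((quant_le_iff hb.1 hb.2).mp le_rfl))

lemma aemeasurable_quant [IsFiniteMeasure μ] (x : ℝ) :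
    AEMeasurable (quant μ) (volume.restrict (Ioc 0 (cdfR μ x))) :=
  aemeasurable_restrict_of_monotoneOn measurableSet_Ioc (monotoneOn_quant x)

lemma map_quant_restrict_Ioc_cdfR [IsFiniteMeasure μ] (x : ℝ) :
    (volume.restrict (Ioc 0 (cdfR μ x))).map (quant μ) = μ.restrict (Icc 0 x) := by
  have : IsFiniteMeasure (volume.restrict (Ioc (0 : ℝ) (cdfR μ x))) := by
    rw [isFiniteMeasure_restrict, Real.volume_Ioc]
    exact ENNReal.ofReal_ne_top
  refine Measure.ext_of_Iic _ _ fun y => ?_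
  have hpre : quant μ ⁻¹' Iic y ∩ Ioc 0 (cdfR μ x) = Ioc 0 (min (cdfR μ x) (cdfR μ y)) := by
    ext t
    simp only [mem_inter_iff, mem_preimage, mem_Iic, mem_Ioc, le_min_iff]
    exact ⟨fun ⟨h, h0, hx⟩ => ⟨h0, hx, (quant_le_iff h0 hx).mp h⟩,
      fun ⟨h0, hx, hy⟩ => ⟨(quant_le_iff h0 hx).mpr hy, h0, hx⟩⟩
  rw [Measure.map_apply_of_aemeasurable (aemeasurable_quant x) measurableSet_Iic,
    Measure.restrict_apply' measurableSet_Ioc, Measure.restrict_apply measurableSet_Iic]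
  have hIcc : Iic y ∩ Icc 0 x = Icc 0 (min x y) := by
    ext
    simp only [mem_inter_iff, mem_Iic, mem_Icc, le_min_iff]
    tauto
  rw [hpre, hIcc, Real.volume_Ioc, sub_zero, ← cdfR_mono.map_min, cdfR,
    ENNReal.ofReal_toReal (measure_ne_top μ _)]

lemma intervalIntegral_quant_eq_setIntegral [IsFiniteMeasure μ] (x : ℝ) :
    ∫ t in (0 : ℝ)..cdfR μ x, quant μ t = ∫ u in Icc 0 x, u ∂μ := by
  rw [intervalIntegral.integral_of_le cdfR_nonneg, ← map_quant_restrict_Ioc_cdfR]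
  exact (integral_map (aemeasurable_quant x) aestronglyMeasurable_id).symm

lemma integral_abs_sub_eq [IsProbabilityMeasure μ] (hμ : Integrable (fun x => x) μ) (c : ℝ) :
    ∫ x, |x - c| ∂μ = ∫ x, x ∂μ - c + 2 * ∫ x in Iic c, (c - x) ∂μ := by
  have habs_eq : ∀ x, |x - c| = (x - c) + 2 * (Iic c).indicator (fun x => c - x) x := by
    intro x
    rcases le_or_gt x c with h | h
    · rw [indicator_of_mem (mem_Iic.mpr h), abs_of_nonpos (by linarith)]; ring
    · rw [indicator_of_notMem (by simpa using h), abs_of_pos (by linarith)]; ring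
  have hsub : Integrable (fun x => x - c) μ := hμ.sub (integrable_const c)
  have hsub_rev : Integrable (fun x => c - x) μ := (integrable_const c).sub hμ
  simp_rw [habs_eq]
  rw [integral_add hsub ((hsub_rev.indicator measurableSet_Iic).const_mul 2),
    integral_sub hμ (integrable_const c), integral_const_mul, integral_indicator measurableSet_Iic]
  simp

lemma Iic_ae_eq_Icc (hμ : μ (Iio 0) = 0) (x : ℝ) : Iic x =ᵐ[μ] Icc 0 x := by
  rw [← Ici_inter_Iic, inter_comm]
  exact (inter_ae_eq_left_of_ae_eq_univ (ae_eq_univ.mpr (by rwa [compl_Ici]))).symm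

end Quantile

/-- `H(μ) = F_μ(m_μ) − L_μ(F_μ(m_μ))`. -/
theorem hoover_eq_cdf_mean_sub_lorenz (μ : Measure ℝ) (hμ : MemM μ) :
    hoover μ = cdfR μ (mMean μ) - lorenz μ (cdfR μ (mMean μ)) := by
  obtain ⟨_, hneg, (hint : Integrable (fun x => x) μ), hm⟩ := hμ
  rw [hoover, lorenz]
  set m := mMean μ
  have habs : ∫ x, |x - m| ∂μ = 2 * ∫ x in Icc 0 m, (m - x) ∂μ := by
    rw [integral_abs_sub_eq hint m, setIntegral_congr_set (Iic_ae_eq_Icc hneg m)]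
    simp [m, mMean]
  have hlower : ∫ x in Icc 0 m, (m - x) ∂μ =
      m * cdfR μ m - ∫ t in (0 : ℝ)..cdfR μ m, quant μ t := by
    rw [integral_sub (integrable_const m) hint.integrableOn, setIntegral_const,
      intervalIntegral_quant_eq_setIntegral, smul_eq_mul, mul_comm]
    rfl
  rw [habs, hlower]
  field_simp
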